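/- arXiv:2208.13289 — 2 statements merged into one kernel-verified Lean document; each statement's English description precedes it below -/
import Mathlib

section
/- Let X be a measurable space, Y and H' real separable Hilbert spaces, and K : X → (Y →L H') a map assigning to each x a bounded operator K_x whose adjoint K_x* : H' → Y plays the role of pointwise evaluation. Assume x ↦ K_x(K_x* g) is Bochner ν-integrable for each g ∈ H' (guaranteed by the measurability of x ↦ ⟨K_t v, K_x w⟩ and the bound below), and assume the Hilbert–Schmidt bound Σ_j ‖K_x b_j‖²_{H'} ≤ κ² for every x ∈ X, where (b_j) is a Hilbert basis of Y. Let ν be a probability measure on X and define T_ν : H' → H' by T_ν g = ∫ K_x (K_x* g) dν(x). Then T_ν is a positive selfadjoint bounded linear operator with ‖T_ν‖ ≤ κ², and for every Hilbert basis (e_i) of H' one has Σ_i ⟨T_ν e_i, e_i⟩ ≤ κ² (so T_ν is trace class). -/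
open MeasureTheory RealInnerProductSpace

/-!
With `K_x^*` the adjoint of `K_x`, `⟪T g, h⟫ = ∫ ⟪K_x^* g, K_x^* h⟫ dν`, so `T` is symmetric and
`⟪T g, g⟫ = ∫ ‖K_x^* g‖² dν ≥ 0`. Parseval in the basis `b` gives
`‖K_x^* g‖² = Σ_j ⟪K_x b_j, g⟫² ≤ Σ_j ‖K_x b_j‖² ‖g‖²`, so `‖K_x‖² = ‖K_x^*‖² ≤ κ²` and
`‖T‖ ≤ κ²`. Parseval in a second basis `e` and exchanging the sums give
`Σ_i ‖K_x^* e_i‖² ≤ Σ_j ‖K_x b_j‖² ≤ κ²`, which integrates to a bound on the partial traces.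
-/

theorem HilbertBasis.hasSum_real_inner_sq {ι E : Type*} [NormedAddCommGroup E]
    [InnerProductSpace ℝ E] (c : HilbertBasis ι ℝ E) (u : E) :
    HasSum (fun i => ⟪c i, u⟫ ^ 2) (‖u‖ ^ 2) := by
  simpa only [sq, real_inner_self_eq_norm_mul_norm, real_inner_comm u] using
    c.hasSum_inner_mul_inner u u

namespace ContinuousLinearMap

variable {ι J E F : Type*} [NormedAddCommGroup E] [InnerProductSpace ℝ E] [CompleteSpace E]
  [NormedAddCommGroup F] [InnerProductSpace ℝ F] [CompleteSpace F]

theorem real_inner_apply_adjoint_apply_self (A : E →L[ℝ] F) (g : F) :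
    ⟪A (adjoint A g), g⟫ = ‖adjoint A g‖ ^ 2 := by
  rw [← adjoint_inner_right, real_inner_self_eq_norm_sq]

theorem hasSum_real_inner_apply_sq (A : E →L[ℝ] F) (b : HilbertBasis J ℝ E) (g : F) :
    HasSum (fun j => ⟪A (b j), g⟫ ^ 2) (‖adjoint A g‖ ^ 2) := by
  simpa only [adjoint_inner_right] using b.hasSum_real_inner_sq (adjoint A g)

theorem norm_adjoint_apply_sq_le (A : E →L[ℝ] F) (b : HilbertBasis J ℝ E)
    (hA : Summable fun j => ‖A (b j)‖ ^ 2) (g : F) :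
    ‖adjoint A g‖ ^ 2 ≤ (∑' j, ‖A (b j)‖ ^ 2) * ‖g‖ ^ 2 := by
  rw [← (A.hasSum_real_inner_apply_sq b g).tsum_eq, ← tsum_mul_right]
  refine (A.hasSum_real_inner_apply_sq b g).summable.tsum_le_tsum (fun j => ?_)
    (hA.mul_right _)
  rw [← mul_pow, ← sq_abs]
  exact pow_le_pow_left₀ (abs_nonneg _) (abs_real_inner_le_norm _ _) 2

theorem norm_sq_le_tsum_norm_apply_sq (A : E →L[ℝ] F) (b : HilbertBasis J ℝ E)
    (hA : Summable fun j => ‖A (b j)‖ ^ 2) :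
    ‖A‖ ^ 2 ≤ ∑' j, ‖A (b j)‖ ^ 2 := by
  have hS : 0 ≤ ∑' j, ‖A (b j)‖ ^ 2 := tsum_nonneg fun j => sq_nonneg _
  rw [← LinearIsometryEquiv.norm_map adjoint A, ← Real.sqrt_le_sqrt_iff hS,
    Real.sqrt_sq (norm_nonneg _)]
  refine opNorm_le_bound _ (Real.sqrt_nonneg _) fun g => ?_
  rw [← Real.sqrt_sq (norm_nonneg g), ← Real.sqrt_mul hS,
    ← Real.sqrt_sq (norm_nonneg (adjoint A g))]
  exact Real.sqrt_le_sqrt (A.norm_adjoint_apply_sq_le b hA g)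

theorem sum_norm_adjoint_apply_sq_le (A : E →L[ℝ] F) (b : HilbertBasis J ℝ E)
    (hA : Summable fun j => ‖A (b j)‖ ^ 2) (e : HilbertBasis ι ℝ F) (s : Finset ι) :
    ∑ i ∈ s, ‖adjoint A (e i)‖ ^ 2 ≤ ∑' j, ‖A (b j)‖ ^ 2 := calc
  ∑ i ∈ s, ‖adjoint A (e i)‖ ^ 2 = ∑' j, ∑ i ∈ s, ⟪A (b j), e i⟫ ^ 2 := by
    simp_rw [← (A.hasSum_real_inner_apply_sq b _).tsum_eq]
    exact (Summable.tsum_finsetSum fun i _ => (A.hasSum_real_inner_apply_sq b _).summable).symm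
  _ ≤ ∑' j, ‖A (b j)‖ ^ 2 := by
    refine Summable.tsum_le_tsum (fun j => ?_)
      (summable_sum fun i _ => (A.hasSum_real_inner_apply_sq b _).summable) hA
    simp_rw [real_inner_comm (e _)]
    exact sum_le_hasSum s (fun i _ => sq_nonneg _) (e.hasSum_real_inner_sq _)

end ContinuousLinearMap

section Covariance

open ContinuousLinearMap

variable {X ι J E F : Type*} [MeasurableSpace X]
  [NormedAddCommGroup E] [InnerProductSpace ℝ E] [CompleteSpace E]
  [NormedAddCommGroup F] [InnerProductSpace ℝ F] [CompleteSpace F]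
  {K : X → E →L[ℝ] F} {ν : Measure X} {T : F →L[ℝ] F}

theorem real_inner_covariance_eq_integral (hT : ∀ g, T g = ∫ x, K x (adjoint (K x) g) ∂ν)
    {g : F} (hg : Integrable (fun x => K x (adjoint (K x) g)) ν) (h : F) :
    ⟪T g, h⟫ = ∫ x, ⟪adjoint (K x) g, adjoint (K x) h⟫ ∂ν := by
  rw [real_inner_comm, hT, ← integral_inner hg h]
  congr 1 with x
  rw [← adjoint_inner_left, real_inner_comm]

theorem real_inner_covariance_self_eq_integral
    (hT : ∀ g, T g = ∫ x, K x (adjoint (K x) g) ∂ν)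
    {g : F} (hg : Integrable (fun x => K x (adjoint (K x) g)) ν) :
    ⟪T g, g⟫ = ∫ x, ‖adjoint (K x) g‖ ^ 2 ∂ν := by
  simp_rw [real_inner_covariance_eq_integral hT hg, real_inner_self_eq_norm_sq]

theorem integrable_norm_adjoint_apply_sq {g : F}
    (hg : Integrable (fun x => K x (adjoint (K x) g)) ν) :
    Integrable (fun x => ‖adjoint (K x) g‖ ^ 2) ν :=
  (hg.inner_const g).congr (.of_forall fun x => (K x).real_inner_apply_adjoint_apply_self g)

theorem isPositive_covariance (hT : ∀ g, T g = ∫ x, K x (adjoint (K x) g) ∂ν)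
    (hInt : ∀ g, Integrable (fun x => K x (adjoint (K x) g)) ν) : T.IsPositive := by
  refine (isPositive_iff T).2 ⟨fun g h => ?_, fun g => ?_⟩
  · change ⟪T g, h⟫ = ⟪g, T h⟫
    rw [real_inner_covariance_eq_integral hT (hInt g), real_inner_comm,
      real_inner_covariance_eq_integral hT (hInt h)]
    simp_rw [real_inner_comm]
  · rw [real_inner_covariance_self_eq_integral hT (hInt g)]
    exact integral_nonneg fun x => sq_nonneg _

theorem norm_covariance_le [IsFiniteMeasure ν] (hT : ∀ g, T g = ∫ x, K x (adjoint (K x) g) ∂ν)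
    {c : ℝ} (hc : 0 ≤ c) (hK : ∀ x, ‖K x‖ ^ 2 ≤ c) :
    ‖T‖ ≤ c * ν.real Set.univ := by
  refine opNorm_le_bound _ (by positivity) fun g => ?_
  rw [hT, mul_right_comm]
  refine norm_integral_le_of_norm_le_const (.of_forall fun x => ?_)
  calc ‖K x (adjoint (K x) g)‖ ≤ ‖K x‖ * (‖adjoint (K x)‖ * ‖g‖) :=
        (K x).le_opNorm_of_le ((adjoint (K x)).le_opNorm g)
    _ = ‖K x‖ ^ 2 * ‖g‖ := by rw [LinearIsometryEquiv.norm_map]; ring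
    _ ≤ c * ‖g‖ := by gcongr; exact hK x

theorem sum_real_inner_covariance_le [IsFiniteMeasure ν]
    (hT : ∀ g, T g = ∫ x, K x (adjoint (K x) g) ∂ν)
    (hInt : ∀ g, Integrable (fun x => K x (adjoint (K x) g)) ν) (b : HilbertBasis J ℝ E)
    (hHS : ∀ x, Summable fun j => ‖K x (b j)‖ ^ 2) {c : ℝ}
    (hc : ∀ x, ∑' j, ‖K x (b j)‖ ^ 2 ≤ c) (e : HilbertBasis ι ℝ F) (s : Finset ι) :
    ∑ i ∈ s, ⟪T (e i), e i⟫ ≤ c * ν.real Set.univ := calc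
  ∑ i ∈ s, ⟪T (e i), e i⟫ = ∫ x, ∑ i ∈ s, ‖adjoint (K x) (e i)‖ ^ 2 ∂ν := by
    rw [integral_finsetSum s fun i _ => integrable_norm_adjoint_apply_sq (hInt (e i))]
    exact Finset.sum_congr rfl fun i _ => real_inner_covariance_self_eq_integral hT (hInt (e i))
  _ ≤ ∫ _, c ∂ν :=
    integral_mono (integrable_finsetSum s fun i _ => integrable_norm_adjoint_apply_sq (hInt (e i)))
      (integrable_const c) fun x =>
        ((K x).sum_norm_adjoint_apply_sq_le b (hHS x) e s).trans (hc x)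
  _ = c * ν.real Set.univ := by rw [integral_const, smul_eq_mul, mul_comm]

end Covariance

theorem covariance_operator_positive_traceClass_general
    {X Y H' : Type*} [MeasurableSpace X]
    [NormedAddCommGroup Y] [InnerProductSpace ℝ Y] [CompleteSpace Y]
    [NormedAddCommGroup H'] [InnerProductSpace ℝ H'] [CompleteSpace H']
    {J : Type*} (b : HilbertBasis J ℝ Y)
    (K : X → (Y →L[ℝ] H')) (κ : ℝ)
    (ν : Measure X) [IsProbabilityMeasure ν]
    (hInt : ∀ g : H', Integrable (fun x => K x ((ContinuousLinearMap.adjoint (K x)) g)) ν)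
    (hHS : ∀ x, Summable (fun j => ‖K x (b j)‖ ^ 2))
    (hκ : ∀ x, (∑' j, ‖K x (b j)‖ ^ 2) ≤ κ ^ 2)
    (T : H' →L[ℝ] H')
    (hT : ∀ g : H', T g = ∫ x, K x ((ContinuousLinearMap.adjoint (K x)) g) ∂ν) :
    T.IsPositive ∧ ‖T‖ ≤ κ ^ 2 ∧
      ∀ {ι : Type*} (e : HilbertBasis ι ℝ H'),
        Summable (fun i => ⟪T (e i), e i⟫) ∧ (∑' i, ⟪T (e i), e i⟫) ≤ κ ^ 2 := by
  have hpos := isPositive_covariance hT hInt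
  have hK : ∀ x, ‖K x‖ ^ 2 ≤ κ ^ 2 := fun x =>
    ((K x).norm_sq_le_tsum_norm_apply_sq b (hHS x)).trans (hκ x)
  refine ⟨hpos, by simpa using norm_covariance_le hT (sq_nonneg κ) hK, fun e => ?_⟩
  have hpartial (s) : ∑ i ∈ s, ⟪T (e i), e i⟫ ≤ κ ^ 2 := by
    simpa using sum_real_inner_covariance_le hT hInt b hHS hκ e s
  have hsummable := summable_of_sum_le (fun i => hpos.inner_nonneg_left (e i)) hpartial
  exact ⟨hsummable, hsummable.tsum_le_of_sum_le hpartial⟩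

/-- Under Assumption 2.3 on the operator-valued kernel sections `K x : Y →L H'`
(Hilbert–Schmidt bound `Σ_j ‖K_x b_j‖² ≤ κ²`), the covariance operator
`T_ν g = ∫ K_x (K_x* g) dν(x)` of a probability measure `ν` is a positive selfadjoint
bounded operator with `‖T_ν‖ ≤ κ²`, and is trace class: for every Hilbert basis `(e i)`
of `H'`, `Σ_i ⟨T_ν e_i, e_i⟩ ≤ κ²`. -/
theorem covariance_operator_positive_traceClass
    {X Y H' : Type*} [MeasurableSpace X]
    [NormedAddCommGroup Y] [InnerProductSpace ℝ Y] [CompleteSpace Y]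
    [TopologicalSpace.SeparableSpace Y]
    [NormedAddCommGroup H'] [InnerProductSpace ℝ H'] [CompleteSpace H']
    [TopologicalSpace.SeparableSpace H']
    {J : Type*} [Countable J] (b : HilbertBasis J ℝ Y)
    (K : X → (Y →L[ℝ] H')) (κ : ℝ)
    (ν : Measure X) [IsProbabilityMeasure ν]
    (hmeas : ∀ (t : X) (v w : Y), Measurable fun x => ⟪K t v, K x w⟫)
    (hInt : ∀ g : H', Integrable (fun x => K x ((ContinuousLinearMap.adjoint (K x)) g)) ν)
    (hHS : ∀ x, Summable (fun j => ‖K x (b j)‖ ^ 2))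
    (hκ : ∀ x, (∑' j, ‖K x (b j)‖ ^ 2) ≤ κ ^ 2)
    (T : H' →L[ℝ] H')
    (hT : ∀ g : H', T g = ∫ x, K x ((ContinuousLinearMap.adjoint (K x)) g) ∂ν) :
    T.IsPositive ∧ ‖T‖ ≤ κ ^ 2 ∧
      ∀ {ι : Type*} (e : HilbertBasis ι ℝ H'),
        Summable (fun i => ⟪T (e i), e i⟫) ∧ (∑' i, ⟪T (e i), e i⟫) ≤ κ ^ 2 :=
  covariance_operator_positive_traceClass_general b K κ ν hInt hHS hκ T hT
end

section
/- Let p ≥ 0, s > 0 and 1 < q ≤ 2 + p with s(q−1) < p + q, and set θ = s(q−1)/(p+q) ∈ (0,1). Then there exists a constant C'' > 0 depending only on p, q, s and C' (explicitly C'' = (8C'²·s(q−1)/(p+q))^{(p+q)/(2(p+q)−2s(q−1))}·((p+q−s(q−1))/(s(q−1)))^{1/2}) such that: for all λ > 0, all C' > 0, and all nonnegative reals D, E, d, R, Θ, Ψ, ℓ, ℓ₁ satisfying (1/2)·D² + (λ/4)·E² ≤ 2C'²·λ·R^{(2p+2)/(p+q)}·D^{2θ} + 4C'²·λ·R^{(2p+2)/(p+q)}·d^{2θ}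 + 4d² + (ℓ²+1)·(ℓ₁Ψ + 2Θ)², one has both D ≤ 2(ℓ+1)(ℓ₁Ψ + 2Θ) + C''·R^{(p+1)/((p+q)−s(q−1))}·λ^{(p+q)/(2(p+q)−2s(q−1))} + 4C'·√λ·R^{(p+1)/(p+q)}·d^{θ} + 4d, and √λ·E ≤ 2(ℓ+1)(ℓ₁Ψ + 2Θ) + C''·R^{(p+1)/((p+q)−s(q−1))}·λ^{(p+q)/(2(p+q)−2s(q−1))} + 4C'·√λ·R^{(p+1)/(p+q)}·d^{θ} + 4d. -/
/-!
Young's inequality in the form `b u^θ - u ≤ ((1 - θ)/θ) (θ b)^(1/(1 - θ))` for `u = D²` absorbs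
the `D^(2θ)` term into the left-hand side, which leaves `D²` and `λE²` each bounded by a sum of
four squares; the square root of such a sum is at most the sum of the roots. What remains is to
express the exponents in `p, q, s` through `θ = s(q - 1)/(p + q)`.
-/

open Real

lemma Real.rpow_two_mul {x : ℝ} (hx : 0 ≤ x) (y : ℝ) : x ^ (2 * y) = (x ^ 2) ^ y := by
  exact_mod_cast rpow_natCast_mul hx 2 y

lemma Real.rpow_pow_two {x : ℝ} (hx : 0 ≤ x) (y : ℝ) : (x ^ y) ^ 2 = x ^ (2 * y) := by
  rw [← rpow_mul_natCast hx, mul_comm, Nat.cast_ofNat]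

/-- The constant is `sup_{u ≥ 0} (b u^θ - u)`, attained at `u = (θ b)^(1/(1 - θ))`. -/
lemma Real.mul_rpow_le_add {θ b u : ℝ} (hθ0 : 0 < θ) (hθ1 : θ < 1) (hb : 0 ≤ b) (hu : 0 ≤ u) :
    b * u ^ θ ≤ u + (1 - θ) / θ * (θ * b) ^ (1 / (1 - θ)) := by
  set w := (θ * b) ^ (1 / (1 - θ))
  have hw : w ^ (1 - θ) = θ * b := by
    rw [← rpow_mul (by positivity), one_div_mul_cancel (by linarith), rpow_one]
  have amgm := geom_mean_le_arith_mean2_weighted hθ0.le (sub_nonneg.2 hθ1.le) hu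
    (by positivity : 0 ≤ w) (add_sub_cancel θ 1)
  rw [hw] at amgm
  refine le_of_mul_le_mul_left ?_ hθ0
  calc θ * (b * u ^ θ) = u ^ θ * (θ * b) := by ring
    _ ≤ θ * u + (1 - θ) * w := amgm
    _ = θ * (u + (1 - θ) / θ * w) := by field_simp

lemma le_add_add_add_of_sq_le {x a b c e : ℝ} (ha : 0 ≤ a) (hb : 0 ≤ b) (hc : 0 ≤ c)
    (he : 0 ≤ e) (h : x ^ 2 ≤ a ^ 2 + b ^ 2 + c ^ 2 + e ^ 2) : x ≤ a + b + c + e :=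
  le_of_sq_le_sq (h.trans <| by
    nlinarith [mul_nonneg ha hb, mul_nonneg ha hc, mul_nonneg ha he, mul_nonneg hb hc,
      mul_nonneg hb he, mul_nonneg hc he]) (by positivity)

theorem le_and_sqrt_mul_le_of_interpolation_ineq {θ C' r lam D E d R X ℓ : ℝ}
    (hθ0 : 0 < θ) (hθ1 : θ < 1) (hC' : 0 ≤ C') (hlam : 0 < lam) (hD : 0 ≤ D) (hd : 0 ≤ d)
    (hR : 0 ≤ R) (hX : 0 ≤ X) (hℓ : 0 ≤ ℓ)
    (h : 1 / 2 * D ^ 2 + lam / 4 * E ^ 2 ≤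
      2 * C' ^ 2 * lam * R ^ (2 * r) * D ^ (2 * θ) +
        4 * C' ^ 2 * lam * R ^ (2 * r) * d ^ (2 * θ) + 4 * d ^ 2 + (ℓ ^ 2 + 1) * X ^ 2) :
    let B := 2 * (ℓ + 1) * X +
      (8 * C' ^ 2 * θ) ^ (1 / (2 * (1 - θ))) * ((1 - θ) / θ) ^ ((1 : ℝ) / 2) *
        R ^ (r / (1 - θ)) * lam ^ (1 / (2 * (1 - θ))) +
      4 * C' * √lam * R ^ r * d ^ θ + 4 * d
    D ≤ B ∧ √lam * E ≤ B := by
  intro B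
  set K := (8 * C' ^ 2 * θ) ^ (1 / (2 * (1 - θ))) * ((1 - θ) / θ) ^ ((1 : ℝ) / 2) *
    R ^ (r / (1 - θ)) * lam ^ (1 / (2 * (1 - θ))) with hK
  set T := 4 * C' * √lam * R ^ r * d ^ θ with hT
  set c := 2 * C' ^ 2 * lam * R ^ (2 * r)
  have young := mul_rpow_le_add hθ0 hθ1 (b := 4 * c) (by positivity) (sq_nonneg D)
  rw [← rpow_two_mul hD] at young
  have hK_sq : K ^ 2 = (1 - θ) / θ * (θ * (4 * c)) ^ (1 / (1 - θ)) := by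
    rw [show θ * (4 * c) = 8 * C' ^ 2 * θ * lam * R ^ (2 * r) by ring,
      mul_rpow (x := 8 * C' ^ 2 * θ * lam) (by positivity) (by positivity),
      mul_rpow (x := 8 * C' ^ 2 * θ) (by positivity) hlam.le, ← rpow_mul hR]
    simp only [hK, mul_pow]
    rw [rpow_pow_two (by positivity), rpow_pow_two (by positivity), rpow_pow_two hR,
      rpow_pow_two hlam.le]
    have h1θ : 1 - θ ≠ 0 := by linarith
    rw [show 2 * (1 / (2 * (1 - θ))) = 1 / (1 - θ) by field_simp,
      show 2 * ((1 : ℝ) / 2) = 1 by norm_num, rpow_one,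
      show 2 * (r / (1 - θ)) = 2 * r * (1 / (1 - θ)) by ring]
    ring
  have hT_sq : T ^ 2 = 16 * C' ^ 2 * lam * R ^ (2 * r) * d ^ (2 * θ) := by
    rw [hT, mul_pow, mul_pow, mul_pow, rpow_pow_two hR, rpow_pow_two hd, sq_sqrt hlam.le]
    ring
  have hsum : D ^ 2 + lam * E ^ 2 ≤ (2 * (ℓ + 1) * X) ^ 2 + K ^ 2 + T ^ 2 + (4 * d) ^ 2 := by
    rw [hK_sq, hT_sq]
    nlinarith [mul_nonneg hℓ (sq_nonneg X)]
  have hX' : 0 ≤ 2 * (ℓ + 1) * X := by positivity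
  have hK' : 0 ≤ K := by positivity
  have hT' : 0 ≤ T := by positivity
  have hd' : 0 ≤ 4 * d := by positivity
  refine ⟨le_add_add_add_of_sq_le hX' hK' hT' hd' ?_,
    le_add_add_add_of_sq_le hX' hK' hT' hd' ?_⟩
  · nlinarith
  · rw [mul_pow, sq_sqrt hlam.le]
    nlinarith

theorem deterministic_core_bound_general
    (p q s : ℝ) (hs : 0 < s) (hq1 : 1 < q)
    (hsq : s * (q - 1) < p + q)
    (θ : ℝ) (hθ : θ = s * (q - 1) / (p + q))
    (C' : ℝ) (hC' : 0 < C')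
    (C'' : ℝ)
    (hC'' : C'' =
      (8 * C' ^ 2 * s * (q - 1) / (p + q)) ^ ((p + q) / (2 * (p + q) - 2 * s * (q - 1))) *
        ((p + q - s * (q - 1)) / (s * (q - 1))) ^ ((1 : ℝ) / 2)) :
    0 < C'' ∧
      ∀ lam D E d R Θ Ψ ℓ ℓ₁ : ℝ,
        0 < lam → 0 ≤ D → 0 ≤ E → 0 ≤ d → 0 ≤ R → 0 ≤ Θ → 0 ≤ Ψ → 0 ≤ ℓ → 0 ≤ ℓ₁ →
        (1 / 2) * D ^ 2 + (lam / 4) * E ^ 2 ≤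
            2 * C' ^ 2 * lam * R ^ ((2 * p + 2) / (p + q)) * D ^ (2 * θ) +
              4 * C' ^ 2 * lam * R ^ ((2 * p + 2) / (p + q)) * d ^ (2 * θ) +
              4 * d ^ 2 + (ℓ ^ 2 + 1) * (ℓ₁ * Ψ + 2 * Θ) ^ 2 →
        (D ≤ 2 * (ℓ + 1) * (ℓ₁ * Ψ + 2 * Θ) +
              C'' * R ^ ((p + 1) / ((p + q) - s * (q - 1))) *
                lam ^ ((p + q) / (2 * (p + q) - 2 * s * (q - 1))) +
              4 * C' * Real.sqrt lam * R ^ ((p + 1) / (p + q)) * d ^ θ + 4 * d) ∧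
          Real.sqrt lam * E ≤ 2 * (ℓ + 1) * (ℓ₁ * Ψ + 2 * Θ) +
              C'' * R ^ ((p + 1) / ((p + q) - s * (q - 1))) *
                lam ^ ((p + q) / (2 * (p + q) - 2 * s * (q - 1))) +
              4 * C' * Real.sqrt lam * R ^ ((p + 1) / (p + q)) * d ^ θ + 4 * d := by
  have hS : 0 < s * (q - 1) := mul_pos hs (sub_pos.2 hq1)
  have hP : 0 < p + q := hS.trans hsq
  have hθ0 : 0 < θ := hθ ▸ div_pos hS hP
  have hθ1 : θ < 1 := hθ ▸ (div_lt_one hP).2 hsq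
  have hsθ : s * (q - 1) = θ * (p + q) := by rw [hθ, div_mul_cancel₀ _ hP.ne']
  have h1θ : 1 - θ ≠ 0 := by linarith
  have hexp_lam : (p + q) / (2 * (p + q) - 2 * s * (q - 1)) = 1 / (2 * (1 - θ)) := by
    rw [mul_assoc 2 s, hsθ]
    field_simp
  have hexp_R : (p + 1) / ((p + q) - s * (q - 1)) = (p + 1) / (p + q) / (1 - θ) := by
    rw [hsθ]
    field_simp
  have hC''θ : C'' = (8 * C' ^ 2 * θ) ^ (1 / (2 * (1 - θ))) * ((1 - θ) / θ) ^ ((1 : ℝ) / 2) := by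
    rw [hC'', hexp_lam, mul_assoc (8 * C' ^ 2) s, hsθ]
    field_simp
  refine ⟨by rw [hC''θ]; positivity, fun lam D E d R Θ Ψ ℓ ℓ₁ hlam hD _ hd hR hΘ hΨ hℓ hℓ₁ h => ?_⟩
  rw [show (2 * p + 2) / (p + q) = 2 * ((p + 1) / (p + q)) by ring] at h
  rw [hC''θ, hexp_lam, hexp_R]
  exact le_and_sqrt_mul_le_of_interpolation_ineq hθ0 hθ1 hC'.le hlam hD hd hR (by positivity) hℓ h

/-- Deterministic core of the proof of Theorem 3.1: if
`(1/2)D² + (λ/4)E² ≤ 2C'²λR^((2p+2)/(p+q))D^(2θ) + 4C'²λR^((2p+2)/(p+q))d^(2θ) + 4d²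
+ (ℓ²+1)(ℓ₁Ψ + 2Θ)²` with `θ = s(q−1)/(p+q) ∈ (0,1)`, then both `D` and `√λ·E` are
bounded by `2(ℓ+1)(ℓ₁Ψ+2Θ) + C''R^((p+1)/((p+q)−s(q−1)))λ^((p+q)/(2(p+q)−2s(q−1)))
+ 4C'√λR^((p+1)/(p+q))d^θ + 4d`, where
`C'' = (8C'²s(q−1)/(p+q))^((p+q)/(2(p+q)−2s(q−1)))·((p+q−s(q−1))/(s(q−1)))^(1/2) > 0`. -/
theorem deterministic_core_bound
    (p q s : ℝ) (hp : 0 ≤ p) (hs : 0 < s) (hq1 : 1 < q) (hq2 : q ≤ 2 + p)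
    (hsq : s * (q - 1) < p + q)
    (θ : ℝ) (hθ : θ = s * (q - 1) / (p + q))
    (C' : ℝ) (hC' : 0 < C')
    (C'' : ℝ)
    (hC'' : C'' =
      (8 * C' ^ 2 * s * (q - 1) / (p + q)) ^ ((p + q) / (2 * (p + q) - 2 * s * (q - 1))) *
        ((p + q - s * (q - 1)) / (s * (q - 1))) ^ ((1 : ℝ) / 2)) :
    0 < C'' ∧
      ∀ lam D E d R Θ Ψ ℓ ℓ₁ : ℝ,
        0 < lam → 0 ≤ D → 0 ≤ E → 0 ≤ d → 0 ≤ R → 0 ≤ Θ → 0 ≤ Ψ → 0 ≤ ℓ → 0 ≤ ℓ₁ →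
        (1 / 2) * D ^ 2 + (lam / 4) * E ^ 2 ≤
            2 * C' ^ 2 * lam * R ^ ((2 * p + 2) / (p + q)) * D ^ (2 * θ) +
              4 * C' ^ 2 * lam * R ^ ((2 * p + 2) / (p + q)) * d ^ (2 * θ) +
              4 * d ^ 2 + (ℓ ^ 2 + 1) * (ℓ₁ * Ψ + 2 * Θ) ^ 2 →
        (D ≤ 2 * (ℓ + 1) * (ℓ₁ * Ψ + 2 * Θ) +
              C'' * R ^ ((p + 1) / ((p + q) - s * (q - 1))) *
                lam ^ ((p + q) / (2 * (p + q) - 2 * s * (q - 1))) +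
              4 * C' * Real.sqrt lam * R ^ ((p + 1) / (p + q)) * d ^ θ + 4 * d) ∧
          Real.sqrt lam * E ≤ 2 * (ℓ + 1) * (ℓ₁ * Ψ + 2 * Θ) +
              C'' * R ^ ((p + 1) / ((p + q) - s * (q - 1))) *
                lam ^ ((p + q) / (2 * (p + q) - 2 * s * (q - 1))) +
              4 * C' * Real.sqrt lam * R ^ ((p + 1) / (p + q)) * d ^ θ + 4 * d :=
  deterministic_core_bound_general p q s hs hq1 hsq θ hθ C' hC' C'' hC''
end
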